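/- arXiv:1211.5630 — 4 statements merged into one kernel-verified Lean document; each statement's English description precedes it below -/
import Mathlib

section
/- Let p be an odd prime not dividing the integer D, where D is a quadratic non-residue mod p. Then the group of solutions to x^2 - D y^2 = 1 in F_p × F_p under the operation (x1, y1) ⊕ (x2, y2) = (x1 x2 + D y1 y2, x1 y2 + x2 y1) is cyclic of order p + 1. -/
/-!
Let `K = Fₚ[√D]` be the quadratic algebra `Fₚ[ω]/(ω² - D)`. The point `(x, y)` of the conic is the
element `x + y√D` of `K`, the equation says that its norm `x² - Dy²` is `1`, and the group law is
multiplication in `K`. When `D` is not a square, `K` is the field with `p²` elements, and the norm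
`Kˣ → Fₚˣ` is surjective, so its kernel has `(p² - 1) / (p - 1) = p + 1` elements. Being a finite
subgroup of the multiplicative group of a field, it is cyclic.
-/

open QuadraticAlgebra

namespace QuadraticAlgebra

variable {R : Type*} [CommRing R]

theorem algebraNorm_eq_norm {a b : R} (z : QuadraticAlgebra R a b) :
    Algebra.norm R z = norm z := by
  rw [Algebra.norm_apply, ← det_toLinearMap_eq_norm]
  rfl

theorem ker_unitsMap_algebraNorm (a b : R) :
    (Units.map (Algebra.norm R : QuadraticAlgebra R a b →* R)).ker =
      unitarySubgroup (QuadraticAlgebra R a b)ˣ := by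
  ext u
  simp [Units.ext_iff, algebraNorm_eq_norm, norm_eq_one_iff_mem_unitary, Units.unitary_eq]

theorem mem_unitary_iff_sq_sub_mul_sq {a : R} {z : QuadraticAlgebra R a 0} :
    z ∈ unitary (QuadraticAlgebra R a 0) ↔ z.re ^ 2 - a * z.im ^ 2 = 1 := by
  rw [← norm_eq_one_iff_mem_unitary, norm_def]
  ring_nf

theorem fact_sq_ne_of_not_isSquare {a : R} (ha : ¬IsSquare a) :
    Fact (∀ r : R, r ^ 2 ≠ a + 0 * r) :=
  ⟨fun r hr => ha ⟨r, by rw [← sq, hr, zero_mul, add_zero]⟩⟩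

theorem natCard_eq_sq {K : Type*} [Field K] (a b : K) :
    Nat.card (QuadraticAlgebra K a b) = Nat.card K ^ 2 := by
  rw [Module.natCard_eq_pow_finrank (K := K), finrank_eq_two]

section FiniteField

variable {F : Type*} [Field F] [Finite F] {a : F} [Fact (∀ r : F, r ^ 2 ≠ a + 0 * r)]

instance : Finite (QuadraticAlgebra F a 0) := Module.finite_of_finite F

theorem natCard_unitary : Nat.card (unitary (QuadraticAlgebra F a 0)) = Nat.card F + 1 := by
  have hsurj := FiniteField.unitsMap_norm_surjective F (QuadraticAlgebra F a 0)
  have key := (Units.map (Algebra.norm F : QuadraticAlgebra F a 0 →* F)).ker.card_mul_index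
  rw [Subgroup.index_ker, MonoidHom.range_eq_top.mpr hsurj, Subgroup.card_top,
    ker_unitsMap_algebraNorm, Nat.card_congr unitarySubgroupUnitsEquiv.toEquiv, Nat.card_units,
    Nat.card_units, natCard_eq_sq] at key
  have hq : 1 < Nat.card F := Finite.one_lt_card
  refine Nat.eq_of_mul_eq_mul_right (Nat.sub_pos_of_lt hq) (key.trans ?_)
  simpa using Nat.sq_sub_sq (Nat.card F) 1

instance isCyclic_unitary : IsCyclic (unitary (QuadraticAlgebra F a 0)) :=
  isCyclic_of_injective_ringHom (unitary _).subtype Subtype.val_injective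

end FiniteField

end QuadraticAlgebra

abbrev PellConic {R : Type*} [CommRing R] (a : R) : Type _ :=
  {v : R × R // v.1 ^ 2 - a * v.2 ^ 2 = 1}

namespace PellConic

section CommRing

variable {R : Type*} [CommRing R] (a : R)

def equivUnitary : PellConic a ≃ unitary (QuadraticAlgebra R a 0) where
  toFun v := ⟨⟨v.val.1, v.val.2⟩, mem_unitary_iff_sq_sub_mul_sq.mpr v.property⟩
  invFun z := ⟨(z.val.re, z.val.im), mem_unitary_iff_sq_sub_mul_sq.mp z.property⟩
  left_inv _ := rfl
  right_inv _ := rfl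

instance : CommGroup (PellConic a) := (equivUnitary a).commGroup

def mulEquivUnitary : PellConic a ≃* unitary (QuadraticAlgebra R a 0) :=
  (equivUnitary a).mulEquiv

theorem val_one : (1 : PellConic a).val = (1, 0) := rfl

theorem val_mul (v w : PellConic a) :
    (v * w).val = (v.val.1 * w.val.1 + a * v.val.2 * w.val.2,
      v.val.1 * w.val.2 + v.val.2 * w.val.1) := by
  change ((_ : QuadraticAlgebra R a 0).re, (_ : QuadraticAlgebra R a 0).im) = _
  simp [equivUnitary]

end CommRing

section FiniteField

variable {F : Type*} [Field F] [Finite F] {a : F}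

theorem natCard_of_not_isSquare (ha : ¬IsSquare a) : Nat.card (PellConic a) = Nat.card F + 1 := by
  have := fact_sq_ne_of_not_isSquare ha
  rw [Nat.card_congr (equivUnitary a), natCard_unitary]

theorem isCyclic_of_not_isSquare (ha : ¬IsSquare a) : IsCyclic (PellConic a) := by
  have := fact_sq_ne_of_not_isSquare ha
  exact (mulEquivUnitary a).isCyclic.mpr inferInstance

end FiniteField

end PellConic

theorem pell_conic_cyclic_nonresidue_general (p : ℕ) [Fact p.Prime] (D : ℤ)
    (hNR : ¬ IsSquare (D : ZMod p)) :
    ∃ G : CommGroup {v : ZMod p × ZMod p // v.1 ^ 2 - (D : ZMod p) * v.2 ^ 2 = 1},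
      (G.one : {v : ZMod p × ZMod p // v.1 ^ 2 - (D : ZMod p) * v.2 ^ 2 = 1}).val = (1, 0) ∧
      (∀ x y : {v : ZMod p × ZMod p // v.1 ^ 2 - (D : ZMod p) * v.2 ^ 2 = 1},
        (G.mul x y).val =
          (x.val.1 * y.val.1 + (D : ZMod p) * x.val.2 * y.val.2,
           x.val.1 * y.val.2 + x.val.2 * y.val.1)) ∧
      Nat.card {v : ZMod p × ZMod p // v.1 ^ 2 - (D : ZMod p) * v.2 ^ 2 = 1} = p + 1 ∧
      @IsCyclic _ (@ZPow.toPow _ G.toDivInvMonoid.toZPow) := by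
  refine ⟨inferInstanceAs (CommGroup (PellConic (D : ZMod p))), PellConic.val_one _,
    PellConic.val_mul _, ?_, PellConic.isCyclic_of_not_isSquare hNR⟩
  rw [PellConic.natCard_of_not_isSquare hNR, Nat.card_zmod]

/-- Let `p` be an odd prime not dividing the integer `D`, with `D` a quadratic
non-residue mod `p`. Then the group of solutions of `x^2 - D y^2 = 1` in
`F_p × F_p`, under `(x₁,y₁) ⊕ (x₂,y₂) = (x₁x₂ + D y₁y₂, x₁y₂ + x₂y₁)` with
identity `(1, 0)`, is cyclic of order `p + 1`. -/
theorem pell_conic_cyclic_nonresidue (p : ℕ) [Fact p.Prime] (hp : p ≠ 2) (D : ℤ)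
    (hD : ¬ (p : ℤ) ∣ D) (hNR : ¬ IsSquare (D : ZMod p)) :
    ∃ G : CommGroup {v : ZMod p × ZMod p // v.1 ^ 2 - (D : ZMod p) * v.2 ^ 2 = 1},
      (G.one : {v : ZMod p × ZMod p // v.1 ^ 2 - (D : ZMod p) * v.2 ^ 2 = 1}).val = (1, 0) ∧
      (∀ x y : {v : ZMod p × ZMod p // v.1 ^ 2 - (D : ZMod p) * v.2 ^ 2 = 1},
        (G.mul x y).val =
          (x.val.1 * y.val.1 + (D : ZMod p) * x.val.2 * y.val.2,
           x.val.1 * y.val.2 + x.val.2 * y.val.1)) ∧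
      Nat.card {v : ZMod p × ZMod p // v.1 ^ 2 - (D : ZMod p) * v.2 ^ 2 = 1} = p + 1 ∧
      @IsCyclic _ (@ZPow.toPow _ G.toDivInvMonoid.toZPow) :=
  pell_conic_cyclic_nonresidue_general p D hNR
end

section
/- Let f be an odd prime not dividing D, and suppose the 2×2 matrix M = [[a, D*b], [b, a]] over Z/fZ satisfies M^(2k) = I for some positive integer k and det(M) = 1 (i.e., a^2 - D b^2 = 1 in Z/fZ). Write M^k = [[A, D*B], [B, A]]. Then B = 0 in Z/fZ, i.e., M^k is a diagonal (scalar) matrix. -/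
/-!
`M^k` is again of the shape `[[A, D B], [B, A]]`, with determinant `det(M)^k = 1`, so
`A² - D B² = 1`; on the other hand `(M^k)² = M^(2k) = 1`, whose top-left entry gives
`A² + D B² = 1`. Subtracting, `2 D B² = 0`, and `2` and `D` are units mod `f`.
-/

section PellMatrix

variable {R : Type*} [CommRing R]

theorem det_pellMatrix (d x y : R) : !![x, d * y; y, x].det = x ^ 2 - d * y ^ 2 := by
  rw [Matrix.det_fin_two_of]
  ring

theorem pellMatrix_sq_apply_zero_zero (d x y : R) :
    (!![x, d * y; y, x] ^ 2) 0 0 = x ^ 2 + d * y ^ 2 := by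
  simp [sq, Matrix.mul_apply, Fin.sum_univ_two]
  ring

theorem two_mul_mul_sq_eq_zero_of_pellMatrix_sq_eq_one {d x y : R}
    (hdet : !![x, d * y; y, x].det = 1) (hsq : !![x, d * y; y, x] ^ 2 = 1) :
    2 * (d * y ^ 2) = 0 := by
  have hplus : x ^ 2 + d * y ^ 2 = 1 := by
    rw [← pellMatrix_sq_apply_zero_zero, hsq, Matrix.one_apply_eq]
  rw [det_pellMatrix] at hdet
  linear_combination hplus - hdet

theorem eq_zero_of_pellMatrix_sq_eq_one [NoZeroDivisors R] {d x y : R} (h2 : (2 : R) ≠ 0)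
    (hd : d ≠ 0) (hdet : !![x, d * y; y, x].det = 1) (hsq : !![x, d * y; y, x] ^ 2 = 1) :
    y = 0 := by
  simpa [h2, hd] using two_mul_mul_sq_eq_zero_of_pellMatrix_sq_eq_one hdet hsq

end PellMatrix

theorem pell_matrix_half_power_diagonal_general (f : ℕ) [Fact f.Prime] (hodd : f ≠ 2)
    (D : ℤ) (hD : (D : ZMod f) ≠ 0) (a b : ZMod f)
    (hdet : a ^ 2 - (D : ZMod f) * b ^ 2 = 1) (k : ℕ)
    (h2k : (!![a, (D : ZMod f) * b; b, a]) ^ (2 * k) = 1)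
    (A B : ZMod f)
    (hAB : (!![a, (D : ZMod f) * b; b, a]) ^ k = !![A, (D : ZMod f) * B; B, A]) :
    B = 0 := by
  have h2 : (2 : ZMod f) ≠ 0 := Ring.two_ne_zero (by rwa [ZMod.ringChar_zmod_n])
  have hdetk : !![A, (D : ZMod f) * B; B, A].det = 1 := by
    rw [← hAB, Matrix.det_pow, det_pellMatrix, hdet, one_pow]
  have hsq : !![A, (D : ZMod f) * B; B, A] ^ 2 = 1 := by
    rw [← hAB, ← pow_mul, Nat.mul_comm, h2k]
  exact eq_zero_of_pellMatrix_sq_eq_one h2 hD hdetk hsq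

/-- Let `f` be an odd prime not dividing `D`, and `M = [[a, D*b], [b, a]]` over
`Z/fZ` with `a^2 - D b^2 = 1` (so `det M = 1`) and `M^(2k) = I` for some `k > 0`.
Writing `M^k = [[A, D*B], [B, A]]`, we have `B = 0`, i.e. `M^k` is diagonal. -/
theorem pell_matrix_half_power_diagonal (f : ℕ) [Fact f.Prime] (hodd : f ≠ 2)
    (D : ℤ) (hD : (D : ZMod f) ≠ 0) (a b : ZMod f)
    (hdet : a ^ 2 - (D : ZMod f) * b ^ 2 = 1) (k : ℕ) (hk : 0 < k)
    (h2k : (!![a, (D : ZMod f) * b; b, a]) ^ (2 * k) = 1)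
    (A B : ZMod f)
    (hAB : (!![a, (D : ZMod f) * b; b, a]) ^ k = !![A, (D : ZMod f) * B; B, A]) :
    B = 0 :=
  pell_matrix_half_power_diagonal_general f hodd D hD a b hdet k h2k A B hAB
end

section
/- Let f be an odd prime not dividing 46, let (a_n, b_n) be defined by (a_n + b_n √46) = (24335 + 3588 √46)^n, and let ψ(f) = f - (46/f) where (46/f) is the Legendre symbol. If f divides b_{ψ(f)}, then f divides b_{ψ(f)/2}. -/
/-!
Reduce modulo `f` into `A = 𝔽_f[ω]/(ω² - 46)`. The Frobenius `z ↦ z^f` fixes `𝔽_f` and sends `ω`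
to `(46/f) ω`, so it is the identity or the conjugation of `A`; either way every `z` of norm `1`
satisfies `z^ψ = 1`. For `x` the image of `u^(ψ/2)`, `u = 24335 + 3588√46`, `x² = 1` and
`N(x) = 1` give `2 re(x)² = 2`, so `re(x) ≠ 0`, and then `2 re(x) im(x) = 0` forces `im(x) = 0`.
-/

namespace QuadraticAlgebra

theorem im_eq_zero_of_sq_eq_one {K : Type*} [Field K] {a : K} (h2 : (2 : K) ≠ 0)
    {z : QuadraticAlgebra K a 0} (hz : norm z = 1) (hsq : z ^ 2 = 1) : z.im = 0 := by
  have hre := congrArg re hsq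
  have him := congrArg im hsq
  simp only [sq, re_mul, im_mul, re_one, im_one, norm_def] at hre him hz
  have hre_sq : 2 * (z.re * z.re) = 2 := by linear_combination hre + hz
  have hre0 : z.re ≠ 0 := by
    rintro h
    apply h2
    rw [← hre_sq, h, mul_zero, mul_zero]
  have him2 : (2 * z.re) * z.im = 0 := by linear_combination him
  exact (mul_eq_zero.mp him2).resolve_left (mul_ne_zero h2 hre0)

section Frobenius

variable {p : ℕ} [Fact p.Prime] {d : ℤ}

instance : CharP (QuadraticAlgebra (ZMod p) d 0) p :=
  charP_of_injective_algebraMap algebraMap_injective p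

theorem omega_pow_prime (hp : p ≠ 2) :
    (ω : QuadraticAlgebra (ZMod p) d 0) ^ p = (legendreSym p d : ZMod p) • ω := by
  have hp : p = 2 * (p / 2) + 1 := (Nat.two_mul_div_two_add_one_of_odd
    ((Fact.out : p.Prime).odd_of_ne_two hp)).symm
  rw [congrArg (ω ^ ·) hp, pow_succ, pow_mul, sq, omega_mul_omega_eq_algebraMap]
  simp [legendreSym.eq_pow, Algebra.smul_def]

theorem mk_pow_prime (hp : p ≠ 2) (x y : ZMod p) :
    (⟨x, y⟩ : QuadraticAlgebra (ZMod p) d 0) ^ p = ⟨x, legendreSym p d * y⟩ := by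
  rw [mk_eq_add_smul_omega, add_pow_char, smul_pow, omega_pow_prime hp, ← map_pow,
    ZMod.pow_card, ZMod.pow_card, mk_eq_add_smul_omega, smul_smul, mul_comm]

theorem pow_sub_legendreSym_eq_one (hp : p ≠ 2) (hd : (d : ZMod p) ≠ 0) {ψ : ℕ}
    (hψ : (ψ : ℤ) = p - legendreSym p d) {z : QuadraticAlgebra (ZMod p) d 0}
    (hz : norm z = 1) : z ^ ψ = 1 := by
  have hunit : z * star z = 1 := by
    rw [← algebraMap_norm_eq_mul_star, hz, map_one]
  obtain ⟨x, y⟩ := z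
  rcases legendreSym.eq_one_or_neg_one p hd with hε | hε
  · have hfrob : (⟨x, y⟩ : QuadraticAlgebra (ZMod p) d 0) ^ p = ⟨x, y⟩ := by
      simp [mk_pow_prime hp, hε]
    rw [hε] at hψ
    calc _ = (⟨x, y⟩ : QuadraticAlgebra (ZMod p) d 0) ^ (ψ + 1) * star ⟨x, y⟩ := by
          rw [pow_succ, mul_assoc, hunit, mul_one]
      _ = 1 := by rw [show ψ + 1 = p by omega, hfrob, hunit]
  · have hfrob : (⟨x, y⟩ : QuadraticAlgebra (ZMod p) d 0) ^ p = star ⟨x, y⟩ := by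
      simp [mk_pow_prime hp, hε]
    rw [hε] at hψ
    rw [show ψ = p + 1 by omega, pow_succ, hfrob, mul_comm, hunit]

end Frobenius
end QuadraticAlgebra

namespace Zsqrtd

open QuadraticAlgebra

def toQuadraticAlgebra (R : Type*) [CommRing R] (d : ℤ) : ℤ√d →+* QuadraticAlgebra R d 0 :=
  lift ⟨ω, by ext <;> simp⟩

variable {R : Type*} [CommRing R] {d : ℤ}

@[simp]
theorem re_toQuadraticAlgebra (z : ℤ√d) : (toQuadraticAlgebra R d z).re = z.re := by
  simp [toQuadraticAlgebra]

@[simp]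
theorem im_toQuadraticAlgebra (z : ℤ√d) : (toQuadraticAlgebra R d z).im = z.im := by
  simp [toQuadraticAlgebra]

theorem norm_toQuadraticAlgebra (z : ℤ√d) :
    QuadraticAlgebra.norm (toQuadraticAlgebra R d z) = z.norm := by
  simp [QuadraticAlgebra.norm_def, Zsqrtd.norm_def]

end Zsqrtd

open QuadraticAlgebra in
theorem pell46_half_psi_of_psi_general (f : ℕ) [Fact f.Prime] (hodd : f ≠ 2)
    (h46 : ¬ (f : ℤ) ∣ 46) (ψ : ℕ) (hψ : (ψ : ℤ) = (f : ℤ) - legendreSym f 46) :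
    (f : ℤ) ∣ (((⟨24335, 3588⟩ : ℤ√46)) ^ (ψ / 2)).im := by
  have hd : ((46 : ℤ) : ZMod f) ≠ 0 := by rwa [Ne, ZMod.intCast_zmod_eq_zero_iff_dvd]
  have hψ_even : 2 ∣ ψ := by
    have := Nat.odd_iff.mp ((Fact.out : f.Prime).odd_of_ne_two hodd)
    rcases legendreSym.eq_one_or_neg_one f hd with h | h <;> rw [h] at hψ <;> omega
  set u := Zsqrtd.toQuadraticAlgebra (ZMod f) 46 ⟨24335, 3588⟩
  have hu : norm u = 1 := by
    rw [Zsqrtd.norm_toQuadraticAlgebra]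
    norm_num [Zsqrtd.norm_def]
  have hsq : (u ^ (ψ / 2)) ^ 2 = 1 := by
    rw [← pow_mul, Nat.div_mul_cancel hψ_even, pow_sub_legendreSym_eq_one hodd hd hψ hu]
  have h2 : (2 : ZMod f) ≠ 0 := Ring.two_ne_zero (by rwa [ZMod.ringChar_zmod_n])
  have him := im_eq_zero_of_sq_eq_one h2 (by rw [map_pow, hu, one_pow]) hsq
  rwa [← map_pow, Zsqrtd.im_toQuadraticAlgebra, ZMod.intCast_zmod_eq_zero_iff_dvd] at him

/-- Let `f` be an odd prime not dividing `46`, let `(aₙ, bₙ)` be defined by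
`aₙ + bₙ√46 = (24335 + 3588√46)^n`, and `ψ = f - (46/f)` (Legendre symbol).
If `f ∣ b_ψ`, then `f ∣ b_{ψ/2}`. -/
theorem pell46_half_psi_of_psi (f : ℕ) [Fact f.Prime] (hodd : f ≠ 2)
    (h46 : ¬ (f : ℤ) ∣ 46) (ψ : ℕ) (hψ : (ψ : ℤ) = (f : ℤ) - legendreSym f 46)
    (hdvd : (f : ℤ) ∣ (((⟨24335, 3588⟩ : ℤ√46)) ^ ψ).im) :
    (f : ℤ) ∣ (((⟨24335, 3588⟩ : ℤ√46)) ^ (ψ / 2)).im :=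
  pell46_half_psi_of_psi_general f hodd h46 ψ hψ
end

section
/- For every squarefree m with 1 < m < 46, writing the fundamental unit of Q(√m) as ε_m = (x + y√m)/c with c = 2 if m ≡ 1 mod 4 and c = 1 otherwise, m does not divide y; while for m = 46 with ε_46 = 24335 + 3588√46, m divides y. -/
/-- `ε = (x + y√m)/c` is the fundamental unit of `ℚ(√m)` (with `c = 2` if
`m ≡ 1 mod 4` and `c = 1` otherwise): it is a unit of the maximal order (norm `±c²`,
integrality condition when `c = 2`), with `x, y > 0`, and it is the smallest such
unit greater than `1`. -/
def IsFundamentalUnit (m : ℕ) (x y : ℤ) : Prop :=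
  0 < x ∧ 0 < y ∧
  (x ^ 2 - (m : ℤ) * y ^ 2 = (if m % 4 = 1 then (2:ℤ) else 1) ^ 2 ∨
   x ^ 2 - (m : ℤ) * y ^ 2 = -((if m % 4 = 1 then (2:ℤ) else 1) ^ 2)) ∧
  (m % 4 = 1 → (2 : ℤ) ∣ (x - y)) ∧
  ∀ x' y' : ℤ, 0 < x' → 0 < y' →
    (x' ^ 2 - (m : ℤ) * y' ^ 2 = (if m % 4 = 1 then (2:ℤ) else 1) ^ 2 ∨
     x' ^ 2 - (m : ℤ) * y' ^ 2 = -((if m % 4 = 1 then (2:ℤ) else 1) ^ 2)) →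
    (m % 4 = 1 → (2 : ℤ) ∣ (x' - y')) →
    (x : ℝ) + (y : ℝ) * Real.sqrt m ≤ (x' : ℝ) + (y' : ℝ) * Real.sqrt m

/-! If `ε = (x + y√m)/c` is the fundamental unit and `(X + Y√m)/c` is any unit with positive
coordinates, then `ε ≤ (X + Y√m)/c`; as `x ≥ y√m - c`, `X ≤ Y√m + c` and `c < √m`, this forces
`y ≤ Y`. So `m ∣ y` can only happen for `y = mk ≤ Y` with `m(mk)² ± c²` a square, which is
ruled out numerically (for most `m < 46` there is no such `k` at all, as `Y < m`).

For `m = 46`, the norm `-1` is impossible modulo `23`, and a solution of `x² - 46y² = 1` with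
`17 ≤ y < 3588` is moved, by multiplication with the conjugate of `24335 + 3588√46`, to one with
`0 < y ≤ 16`, of which there are none. -/

open Real

abbrev unitDenom (m : ℕ) : ℤ := if m % 4 = 1 then 2 else 1

def HasUnitNorm (m : ℕ) (x y : ℤ) : Prop :=
  x ^ 2 - m * y ^ 2 = unitDenom m ^ 2 ∨ x ^ 2 - m * y ^ 2 = -unitDenom m ^ 2

def IsPosUnit (m : ℕ) (x y : ℤ) : Prop :=
  0 < x ∧ 0 < y ∧ HasUnitNorm m x y ∧ (m % 4 = 1 → (2 : ℤ) ∣ x - y)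

theorem unitDenom_sq_lt {m : ℕ} (hm : 1 < m) : unitDenom m ^ 2 < m := by
  unfold unitDenom
  split_ifs <;> omega

theorem HasUnitNorm.sub_sq_le {m : ℕ} {x y : ℤ} (h : HasUnitNorm m x y) :
    m * y ^ 2 - unitDenom m ^ 2 ≤ x ^ 2 := by
  rcases h with h | h <;> nlinarith [sq_nonneg (unitDenom m)]

theorem HasUnitNorm.sq_le_add {m : ℕ} {x y : ℤ} (h : HasUnitNorm m x y) :
    x ^ 2 ≤ m * y ^ 2 + unitDenom m ^ 2 := by
  rcases h with h | h <;> nlinarith [sq_nonneg (unitDenom m)]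

theorem not_hasUnitNorm_of_not_isSquare {m : ℕ} {y : ℤ}
    (hplus : ¬IsSquare (m * y ^ 2 + unitDenom m ^ 2))
    (hminus : ¬IsSquare (m * y ^ 2 - unitDenom m ^ 2)) (x : ℤ) : ¬HasUnitNorm m x y := by
  rintro (h | h)
  · exact hplus ⟨x, by linear_combination -h⟩
  · exact hminus ⟨x, by linear_combination -h⟩

theorem le_of_add_mul_sqrt_le {m : ℕ} {c x y X Y : ℤ} (hc : 0 ≤ c) (hcm : c ^ 2 < m)
    (hx : 0 ≤ x) (hy : 0 < y) (hY : 0 ≤ Y) (hxy : m * y ^ 2 - c ^ 2 ≤ x ^ 2)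
    (hXY : X ^ 2 ≤ m * Y ^ 2 + c ^ 2) (h : (x : ℝ) + y * √m ≤ X + Y * √m) : y ≤ Y := by
  have hs : √(m : ℝ) ^ 2 = m := sq_sqrt m.cast_nonneg
  have hc' : (0 : ℝ) ≤ c := by exact_mod_cast hc
  have hcs : (c : ℝ) < √m := (lt_sqrt hc').2 (by exact_mod_cast hcm)
  have hy' : (1 : ℝ) ≤ y := by exact_mod_cast hy
  have hx' : (0 : ℝ) ≤ x := by exact_mod_cast hx
  have hY' : (0 : ℝ) ≤ Y := by exact_mod_cast hY
  have hxy' : (m : ℝ) * y ^ 2 - c ^ 2 ≤ x ^ 2 := by exact_mod_cast hxy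
  have hXY' : (X : ℝ) ^ 2 ≤ m * Y ^ 2 + c ^ 2 := by exact_mod_cast hXY
  have hx_ge : y * √m - c ≤ x := by
    nlinarith [mul_le_mul_of_nonneg_right hy' (sqrt_nonneg (m : ℝ))]
  have hX_le : X ≤ Y * √m + c := by
    nlinarith [mul_nonneg hY' (sqrt_nonneg (m : ℝ))]
  have hgap : ((y - Y : ℤ) : ℝ) * √m < 1 * √m := by push_cast; nlinarith
  have : y - Y < 1 := by exact_mod_cast lt_of_mul_lt_mul_right hgap (sqrt_nonneg _)
  omega

theorem IsFundamentalUnit.isPosUnit {m : ℕ} {x y : ℤ} (h : IsFundamentalUnit m x y) :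
    IsPosUnit m x y :=
  ⟨h.1, h.2.1, h.2.2.1, h.2.2.2.1⟩

theorem IsFundamentalUnit.le_of_isPosUnit {m : ℕ} {x y X Y : ℤ} (h : IsFundamentalUnit m x y)
    (hXY : IsPosUnit m X Y) : (x : ℝ) + y * √m ≤ X + Y * √m :=
  h.2.2.2.2 X Y hXY.1 hXY.2.1 hXY.2.2.1 hXY.2.2.2

theorem IsFundamentalUnit.y_le {m : ℕ} {x y X Y : ℤ} (h : IsFundamentalUnit m x y)
    (hm : 1 < m) (hXY : IsPosUnit m X Y) : y ≤ Y :=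
  le_of_add_mul_sqrt_le (by positivity) (unitDenom_sq_lt hm) h.1.le h.2.1 hXY.2.1.le
    h.isPosUnit.2.2.1.sub_sq_le hXY.2.2.1.sq_le_add (h.le_of_isPosUnit hXY)

theorem IsFundamentalUnit.not_dvd_y {m : ℕ} {x y X Y : ℤ} (h : IsFundamentalUnit m x y)
    (hm : 1 < m) (hXY : IsPosUnit m X Y)
    (hmul : ∀ k : ℤ, 0 < k → k ≤ Y / m → ∀ x, ¬HasUnitNorm m x (m * k)) :
    ¬(m : ℤ) ∣ y := by
  rintro ⟨k, rfl⟩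
  have hm0 : (0 : ℤ) < m := by exact_mod_cast (zero_lt_one.trans hm)
  have hk : 0 < k := pos_of_mul_pos_right h.2.1 hm0.le
  have hkY : k ≤ Y / m := (Int.le_ediv_iff_mul_le hm0).2 (by linarith [h.y_le hm hXY])
  exact hmul k hk hkY x h.isPosUnit.2.2.1

def fundamentalUnitTable : ℕ → ℤ × ℤ
  | 2 => (1, 1) | 3 => (2, 1) | 5 => (1, 1) | 6 => (5, 2) | 7 => (8, 3) | 10 => (3, 1)
  | 11 => (10, 3) | 13 => (3, 1) | 14 => (15, 4) | 15 => (4, 1) | 17 => (8, 2)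
  | 19 => (170, 39) | 21 => (5, 1) | 22 => (197, 42) | 23 => (24, 5) | 26 => (5, 1)
  | 29 => (5, 1) | 30 => (11, 2) | 31 => (1520, 273) | 33 => (46, 8) | 34 => (35, 6)
  | 35 => (6, 1) | 37 => (12, 2) | 38 => (37, 6) | 39 => (25, 4) | 41 => (64, 10)
  | 42 => (13, 2) | 43 => (3482, 531) | _ => (0, 0)

theorem isPosUnit_fundamentalUnitTable {m : ℕ} (hsf : Squarefree m) (hm1 : 1 < m)
    (hm46 : m < 46) :
    IsPosUnit m (fundamentalUnitTable m).1 (fundamentalUnitTable m).2 := by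
  interval_cases m <;> first
    | exact absurd hsf (by decide +kernel)
    | norm_num [IsPosUnit, HasUnitNorm, fundamentalUnitTable]

theorem not_hasUnitNorm_mul_of_le_fundamentalUnitTable {m : ℕ} (hm1 : 1 < m) (hm46 : m < 46)
    (k : ℤ) (hk : 0 < k) (hkY : k ≤ (fundamentalUnitTable m).2 / m) (x : ℤ) :
    ¬HasUnitNorm m x (m * k) := by
  interval_cases m <;> norm_num [fundamentalUnitTable] at hkY <;> interval_cases k <;>
    exact not_hasUnitNorm_of_not_isSquare (by norm_num) (by norm_num) x

theorem sq_sub_mul_sq_ne_neg_one {p m : ℕ} [Fact p.Prime] (hp : p % 4 = 3) (hpm : p ∣ m)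
    (x y : ℤ) : x ^ 2 - m * y ^ 2 ≠ -1 := by
  intro h
  have hm : (m : ZMod p) = 0 := (ZMod.natCast_eq_zero_iff m p).2 hpm
  have hx : (x : ZMod p) ^ 2 = -1 := by
    simpa [hm] using congrArg (Int.cast : ℤ → ZMod p) h
  exact ZMod.mod_four_ne_three_of_sq_eq_neg_one hx hp

theorem exists_small_pell46_of_lt {a y : ℤ} (ha : 0 ≤ a) (h : a ^ 2 = 46 * y ^ 2 + 1)
    (hy : 0 < y) (hyY : y < 3588) : ∃ y' : ℤ, 0 < y' ∧ y' ≤ 16 ∧ IsSquare (46 * y' ^ 2 + 1) := by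
  by_cases hy16 : y ≤ 16
  · exact ⟨y, hy, hy16, a, by rw [← h]; ring⟩
  -- the coordinates of `(24335 + 3588√46) / (a + y√46)`
  refine ⟨3588 * a - 24335 * y, ?_, ?_, 24335 * a - 165048 * y, by linear_combination -h⟩
  · nlinarith
  · nlinarith

theorem le_y_of_pell46 {a y : ℤ} (h : a ^ 2 = 46 * y ^ 2 + 1) (hy : 0 < y) : 3588 ≤ y := by
  by_contra! hyY
  obtain ⟨y', hy', hy'16, hsq⟩ :=
    exists_small_pell46_of_lt (abs_nonneg a) (by rw [sq_abs, h]) hy hyY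
  interval_cases y' <;> norm_num at hsq

theorem isFundamentalUnit_46 : IsFundamentalUnit 46 24335 3588 := by
  refine ⟨by norm_num, by norm_num, Or.inl (by norm_num), by norm_num, ?_⟩
  intro x y hx hy hnorm _
  norm_num at hnorm
  rcases hnorm with hnorm | hnorm
  · have hy' : 3588 ≤ y := le_y_of_pell46 (a := x) (by linear_combination hnorm) hy
    have hx' : 24335 ≤ x := by nlinarith
    gcongr
  · have : Fact (Nat.Prime 23) := ⟨by norm_num⟩
    exact absurd hnorm <|
      sq_sub_mul_sq_ne_neg_one (p := 23) (m := 46) (by norm_num) (by norm_num) x y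

/-- For every squarefree `m` with `1 < m < 46`, writing the fundamental unit of
`ℚ(√m)` as `ε_m = (x + y√m)/c`, `m` does not divide `y`; while for `m = 46`, the
fundamental unit is `ε₄₆ = 24335 + 3588√46` and `46 ∣ 3588`. -/
theorem fund_unit_y_divisibility :
    (∀ m : ℕ, Squarefree m → 1 < m → m < 46 →
      ∀ x y : ℤ, IsFundamentalUnit m x y → ¬ (m : ℤ) ∣ y) ∧
    (IsFundamentalUnit 46 24335 3588 ∧ (46 : ℤ) ∣ 3588) := by
  refine ⟨fun m hsf hm1 hm46 x y h => ?_, isFundamentalUnit_46, by norm_num⟩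
  exact h.not_dvd_y hm1 (isPosUnit_fundamentalUnitTable hsf hm1 hm46)
    (not_hasUnitNorm_mul_of_le_fundamentalUnitTable hm1 hm46)
end
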